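/- There is no nonzero assignment of orthogonal projections to translates on the real line compatible with a positive-energy translation group and orthogonality at disjoint separation: if U(a) = exp(iaP) is a strongly continuous unitary group on a Hilbert space with P ≥ 0, and E is a nonzero projection such that E·U(a)E U(a)⁻¹ = 0 for all a in some nonempty open interval I not containing 0, then E = 0. -/

import Mathlib

/-!
The matrix coefficient `F(t) = ⟪E x, U(t) E x⟫` extends to a function continuous on the closed
upper half-plane and holomorphic inside (positivity of the generator), and the orthogonality
hypothesis makes it vanish on the real interval `(a, b)`. Extending `F` by zero to the lower
half-plane gives a function that is continuous on the strip over `(a, b)` and holomorphic off the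
real axis; splitting rectangles along the axis shows that its rectangle integrals vanish, so by
Morera it is holomorphic on the strip. The identity theorem, applied first on the strip and then on
the upper half-plane, forces `F = 0`, and in particular `‖E x‖² = F(0) = 0`.
-/

open Complex Set MeasureTheory intervalIntegral
open scoped Interval InnerProductSpace

namespace Complex

variable {E : Type*} [NormedAddCommGroup E] [NormedSpace ℂ E]

noncomputable def rectIntegral (f : ℂ → E) (x₁ x₂ y₁ y₂ : ℝ) : E :=
  (∫ x : ℝ in x₁..x₂, f (x + y₁ * I)) - (∫ x : ℝ in x₁..x₂, f (x + y₂ * I)) +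
    I • (∫ y : ℝ in y₁..y₂, f (x₂ + y * I)) - I • ∫ y : ℝ in y₁..y₂, f (x₁ + y * I)

theorem rectIntegral_add_rectIntegral {f : ℂ → E} {x₁ x₂ y₁ y₂ y₃ : ℝ}
    (h₁ : IntervalIntegrable (fun y : ℝ => f (x₁ + y * I)) volume y₁ y₂)
    (h₁' : IntervalIntegrable (fun y : ℝ => f (x₁ + y * I)) volume y₂ y₃)
    (h₂ : IntervalIntegrable (fun y : ℝ => f (x₂ + y * I)) volume y₁ y₂)
    (h₂' : IntervalIntegrable (fun y : ℝ => f (x₂ + y * I)) volume y₂ y₃) :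
    rectIntegral f x₁ x₂ y₁ y₂ + rectIntegral f x₁ x₂ y₂ y₃ = rectIntegral f x₁ x₂ y₁ y₃ := by
  simp only [rectIntegral, ← integral_add_adjacent_intervals h₁ h₁',
    ← integral_add_adjacent_intervals h₂ h₂', smul_add]
  abel

variable {s : Set ℝ} {f : ℂ → E}

theorem rectIntegral_eq_zero_of_notMem_Ioo (hc : ContinuousOn f (s ×ℂ univ))
    (hd : DifferentiableOn ℂ f (s ×ℂ {0}ᶜ)) {x₁ x₂ y₁ y₂ : ℝ} (hx : [[x₁, x₂]] ⊆ s)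
    (hy : (0 : ℝ) ∉ Ioo (min y₁ y₂) (max y₁ y₂)) :
    rectIntegral f x₁ x₂ y₁ y₂ = 0 :=
  integral_boundary_rect_eq_zero_of_continuousOn_of_differentiableOn f ⟨x₁, y₁⟩ ⟨x₂, y₂⟩
    (hc.mono <| reProdIm_subset_iff.2 (prod_mono hx (subset_univ _)))
    (hd.mono <| reProdIm_subset_iff.2 (prod_mono (Ioo_subset_Icc_self.trans hx)
      fun _ hy' h => hy (h ▸ hy')))

theorem isConservativeOn_reProdIm_univ (hc : ContinuousOn f (s ×ℂ univ))
    (hd : DifferentiableOn ℂ f (s ×ℂ {0}ᶜ)) : IsConservativeOn f (s ×ℂ univ) := by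
  intro z w hzw
  have hx : [[z.re, w.re]] ⊆ s := fun x hx =>
    (hzw (show (⟨x, z.im⟩ : ℂ) ∈ Rectangle z w from ⟨hx, left_mem_uIcc⟩)).1
  have hvert : ∀ x ∈ s, ∀ u v : ℝ, IntervalIntegrable (fun y : ℝ => f (x + y * I)) volume u v :=
    fun x hx u v => (hc.comp_continuous (f := fun y : ℝ => (x + y * I : ℂ)) (by fun_prop)
      fun y => by simp [mem_reProdIm, hx]).intervalIntegrable u v
  have hzs := hx left_mem_uIcc
  have hws := hx right_mem_uIcc
  rw [← add_eq_zero_iff_eq_neg, wedgeIntegral_add_wedgeIntegral_eq]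
  change rectIntegral f z.re w.re z.im w.im = 0
  rw [← rectIntegral_add_rectIntegral (y₂ := 0) (hvert _ hzs _ _) (hvert _ hzs _ _)
      (hvert _ hws _ _) (hvert _ hws _ _),
    rectIntegral_eq_zero_of_notMem_Ioo hc hd hx (by grind),
    rectIntegral_eq_zero_of_notMem_Ioo hc hd hx (by grind), add_zero]

theorem differentiableOn_reProdIm_univ [CompleteSpace E] (hs : IsOpen s)
    (hc : ContinuousOn f (s ×ℂ univ)) (hd : DifferentiableOn ℂ f (s ×ℂ {0}ᶜ)) :
    DifferentiableOn ℂ f (s ×ℂ univ) :=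
  (isConservativeOn_and_continuousOn_iff_isDifferentiableOn (hs.reProdIm isOpen_univ)).1
    ⟨isConservativeOn_reProdIm_univ hc hd, hc⟩

theorem differentiableOn_indicator_setOf_im_pos [CompleteSpace E] {F : ℂ → E} (hs : IsOpen s)
    (hc : ContinuousOn F {z | 0 ≤ z.im}) (hd : DifferentiableOn ℂ F {z | 0 < z.im})
    (hF : ∀ t ∈ s, F t = 0) :
    DifferentiableOn ℂ ({z : ℂ | 0 < z.im}.indicator F) (s ×ℂ univ) := by
  refine differentiableOn_reProdIm_univ hs ?_ fun z hz => ?_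
  · refine ContinuousOn.piecewise (fun z ⟨hzs, hz⟩ => ?_) ?_ continuousOn_const
    · rw [frontier_setOfPred_lt_im] at hz
      rw [← re_add_im z, show z.im = 0 from hz, ofReal_zero, zero_mul, add_zero]
      exact hF _ hzs.1
    · exact hc.mono (by rw [closure_setOfPred_lt_im]; exact inter_subset_right)
  · refine DifferentiableAt.differentiableWithinAt ?_
    rcases (show z.im ≠ 0 from hz.2).lt_or_gt with hneg | hpos
    · refine (differentiableAt_const (0 : E)).congr_of_eventuallyEq ?_
      filter_upwards [(isOpen_lt continuous_im continuous_const).mem_nhds hneg] with w hw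
      exact indicator_of_notMem (a := w) hw.not_gt F
    · have hupper : IsOpen {z : ℂ | 0 < z.im} := isOpen_lt continuous_const continuous_im
      refine (hd.differentiableAt (hupper.mem_nhds hpos)).congr_of_eventuallyEq ?_
      filter_upwards [hupper.mem_nhds hpos] with w hw
      exact indicator_of_mem (a := w) hw F

theorem eqOn_zero_of_forall_Ioo_eq_zero [CompleteSpace E] {F : ℂ → E}
    (hc : ContinuousOn F {z | 0 ≤ z.im}) (hd : DifferentiableOn ℂ F {z | 0 < z.im}) {a b : ℝ}
    (hab : a < b) (hF : ∀ t ∈ Ioo a b, F t = 0) : EqOn F 0 {z | 0 ≤ z.im} := by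
  have hupper : IsOpen {z : ℂ | 0 < z.im} := isOpen_lt continuous_const continuous_im
  set S := Ioo a b ×ℂ univ
  have hSopen : IsOpen S := isOpen_Ioo.reProdIm isOpen_univ
  have hSconv : Convex ℝ S :=
    ((convex_Ioo a b).linear_preimage reLm).inter (convex_univ.linear_preimage imLm)
  set G := {z : ℂ | 0 < z.im}.indicator F
  obtain ⟨c, hc_mem⟩ := nonempty_Ioo.2 hab
  -- `G` vanishes on the lower half of the strip, so on all of it
  have hG : EqOn G 0 S := by
    refine ((differentiableOn_indicator_setOf_im_pos isOpen_Ioo hc hd hF).analyticOnNhd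
      hSopen).eqOn_zero_of_preconnected_of_eventuallyEq_zero hSconv.isPreconnected
      (z₀ := ⟨c, -1⟩) ⟨hc_mem, trivial⟩ ?_
    filter_upwards [(isOpen_lt continuous_im continuous_const).mem_nhds
      (show (-1 : ℝ) < 0 by norm_num)] with w hw
    exact indicator_of_notMem (a := w) hw.not_gt F
  have hF_upper : EqOn F 0 {z | 0 < z.im} := by
    refine (hd.analyticOnNhd hupper).eqOn_zero_of_preconnected_of_eventuallyEq_zero
      (convex_halfSpace_im_gt 0).isPreconnected (z₀ := ⟨c, 1⟩) (zero_lt_one' ℝ) ?_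
    filter_upwards [(hSopen.inter hupper).mem_nhds ⟨⟨hc_mem, trivial⟩, zero_lt_one' ℝ⟩]
      with w ⟨hwS, hw⟩
    rw [← indicator_of_mem (a := w) hw F]
    exact hG hwS
  refine hF_upper.of_subset_closure hc continuousOn_const (fun z (hz : 0 < z.im) => hz.le) ?_
  rw [closure_setOfPred_lt_im]

end Complex

theorem IsSelfAdjoint.inner_apply_eq_zero_of_mul_conj_eq_zero {H : Type*}
    [NormedAddCommGroup H] [InnerProductSpace ℂ H] [CompleteSpace H] {E V : H →L[ℂ] H}
    (hE : IsSelfAdjoint E) (hV : star V * V = 1) (h : E * (V * E * star V) = 0) (x : H) :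
    ⟪E x, V (E x)⟫_ℂ = 0 := by
  have hEVE : E * V * E = 0 :=
    calc E * V * E = E * (V * E * star V) * V := by simp only [mul_assoc, hV, mul_one]
      _ = 0 := by rw [h, zero_mul]
  calc ⟪E x, V (E x)⟫_ℂ = ⟪x, (E * V * E) x⟫_ℂ := hE.isSymmetric x (V (E x))
    _ = 0 := by simp [hEVE]

theorem stmt_2_general {H : Type*} [NormedAddCommGroup H] [InnerProductSpace ℂ H] [CompleteSpace H]
    (U : ℝ → (H →L[ℂ] H))
    (hU0 : U 0 = 1)
    (hUunit : ∀ t : ℝ, star (U t) * U t = 1 ∧ U t * star (U t) = 1)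
    (hpos : ∀ x y : H, ∃ F : ℂ → ℂ, ContinuousOn F {z : ℂ | 0 ≤ z.im} ∧
      DifferentiableOn ℂ F {z : ℂ | 0 < z.im} ∧
      (∃ C : ℝ, ∀ z ∈ {z : ℂ | 0 ≤ z.im}, ‖F z‖ ≤ C) ∧
      ∀ t : ℝ, F (t : ℂ) = (inner ℂ x (U t y) : ℂ))
    (E : H →L[ℂ] H) (hEsa : IsSelfAdjoint E)
    (a b : ℝ) (hab : a < b)
    (horth : ∀ s ∈ Set.Ioo a b, E * (U s * E * star (U s)) = 0) :
    E = 0 := by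
  ext x
  obtain ⟨F, hFc, hFd, -, hF⟩ := hpos (E x) (E x)
  have hvan (t : ℝ) (ht : t ∈ Ioo a b) : F t = 0 := by
    rw [hF t]
    exact hEsa.inner_apply_eq_zero_of_mul_conj_eq_zero (hUunit t).1 (horth t ht) x
  have hF0 : F (0 : ℝ) = 0 :=
    eqOn_zero_of_forall_Ioo_eq_zero hFc hFd hab hvan (show 0 ≤ ((0 : ℝ) : ℂ).im from le_rfl)
  rw [hF 0, hU0] at hF0
  simpa using hF0

/-- (One-dimensional version of "localization via position operators
conflicts with causality".)  Let `U a = exp(iaP)` be a strongly continuous unitary group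
with positive generator `P ≥ 0` (positivity expressed by bounded analytic extension of
all matrix elements to the upper half-plane), and let `E` be an orthogonal projection
such that `E · (U a) E (U a)⁻¹ = 0` for all `a` in some nonempty open interval not
containing `0`.  Then `E = 0`. -/
theorem stmt_2 {H : Type*} [NormedAddCommGroup H] [InnerProductSpace ℂ H] [CompleteSpace H]
    (U : ℝ → (H →L[ℂ] H))
    (hU0 : U 0 = 1)
    (hUgrp : ∀ s t : ℝ, U (s + t) = U s * U t)
    (hUunit : ∀ t : ℝ, star (U t) * U t = 1 ∧ U t * star (U t) = 1)
    (hUcont : ∀ x : H, Continuous fun t : ℝ => U t x)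
    (hpos : ∀ x y : H, ∃ F : ℂ → ℂ, ContinuousOn F {z : ℂ | 0 ≤ z.im} ∧
      DifferentiableOn ℂ F {z : ℂ | 0 < z.im} ∧
      (∃ C : ℝ, ∀ z ∈ {z : ℂ | 0 ≤ z.im}, ‖F z‖ ≤ C) ∧
      ∀ t : ℝ, F (t : ℂ) = (inner ℂ x (U t y) : ℂ))
    (E : H →L[ℂ] H) (hEproj : IsIdempotentElem E) (hEsa : IsSelfAdjoint E)
    (a b : ℝ) (hab : a < b) (h0 : (0 : ℝ) ∉ Set.Ioo a b)
    (horth : ∀ s ∈ Set.Ioo a b, E * (U s * E * star (U s)) = 0) :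
    E = 0 :=
  stmt_2_general U hU0 hUunit hpos E hEsa a b hab horth
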